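/- Let d ∈ ℕ, d ≥ 1, let α > 5/2 be real, and let v̂ : ℤ^d → ℂ satisfy ‖v̂‖_α := (Σ_{h ∈ ℤ^d} |v̂(h)|² r_α(h)²)^{1/2} < ∞. Then Σ_{h ∈ ℤ^d} ‖h‖₂² |v̂(h)| ≤ d · (1 + 2ζ(2α − 4))^{d/2} · ‖v̂‖_α, where ‖h‖₂ is the Euclidean norm of h; in particular the left-hand side is finite. -/

import Mathlib

/-!
Write `w(h) = r_α(h)²`. By Cauchy–Schwarz,
`Σ ‖h‖₂² |v̂(h)| ≤ (Σ ‖h‖₂⁴ / w(h))^{1/2} ‖v̂‖_α`, and `‖h‖₂⁴ ≤ d Σ_j h_j⁴`. Each term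
`h_j⁴ / w(h)` is dominated by the product `∏_k g(h_k)` with
`g(m) = max(m⁴, 1) / max(|m|^{2α}, 1)`, whose sum over `ℤ^d` factorizes as
`(Σ_m g(m))^d = (1 + 2ζ(2α - 4))^d`. Hence `Σ ‖h‖₂⁴ / w(h) ≤ d² (1 + 2ζ(2α - 4))^d`.
-/

noncomputable section

/-- The squared Korobov weight `r_α(h)² = ∏_j max(|h_j|^(2α), 1)`. -/
def korWeightSq {d : ℕ} (α : ℝ) (h : Fin d → ℤ) : ℝ :=
  ∏ j, max (|(h j : ℝ)| ^ (2 * α)) 1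

/-- The squared Euclidean norm `‖h‖₂² = Σ_j h_j²` of `h ∈ ℤ^d`. -/
def normSq {d : ℕ} (h : Fin d → ℤ) : ℝ := ∑ j, (h j : ℝ) ^ 2

/-- The Riemann zeta function at a real argument `s`, `ζ(s) = Σ_{m ≥ 1} m^{-s}`. -/
def zetaR (s : ℝ) : ℝ := ∑' m : ℕ, 1 / ((m : ℝ) + 1) ^ s

open Finset

theorem hasSum_fin_pi_prod_of_nonneg {β : Type*} {d : ℕ} {f : Fin d → β → ℝ} {a : Fin d → ℝ}
    (hf0 : ∀ j b, 0 ≤ f j b) (hf : ∀ j, HasSum (f j) (a j)) :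
    HasSum (fun h : Fin d → β => ∏ j, f j (h j)) (∏ j, a j) := by
  induction d with
  | zero => simp
  | succ n ih =>
    have htail : HasSum (fun t : Fin n → β => ∏ j : Fin n, f j.succ (t j)) (∏ j : Fin n, a j.succ) :=
      ih (fun j => hf0 j.succ) (fun j => hf j.succ)
    have htail_nonneg : 0 ≤ fun t : Fin n → β => ∏ j : Fin n, f j.succ (t j) :=
      fun t => prod_nonneg fun j _ => hf0 j.succ (t j)
    have hsplit : (fun h : Fin (n + 1) → β => ∏ j, f j (h j)) ∘ Fin.consEquiv (fun _ => β) =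
        fun p => f 0 p.1 * ∏ j : Fin n, f j.succ (p.2 j) := by
      ext ⟨b, t⟩
      simp [Fin.prod_univ_succ]
    have hprod := (hf 0).summable.mul_of_nonneg htail.summable (hf0 0) htail_nonneg
    have hmul := (hf 0).mul htail hprod
    refine (Fin.consEquiv fun _ => β).hasSum_iff.mp ?_
    rw [hsplit, Fin.prod_univ_succ a]
    exact hmul

theorem summable_mul_and_tsum_mul_le_sqrt_mul_sqrt_of_weight {ι : Type*} {a b w : ι → ℝ}
    (ha : ∀ i, 0 ≤ a i) (hb : ∀ i, 0 ≤ b i) (hw : ∀ i, 0 < w i)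
    (hA : Summable fun i => a i ^ 2 / w i) (hB : Summable fun i => b i ^ 2 * w i) :
    (Summable fun i => a i * b i) ∧
      ∑' i, a i * b i ≤ √(∑' i, a i ^ 2 / w i) * √(∑' i, b i ^ 2 * w i) := by
  have hsq_a : ∀ i, (a i / √(w i)) ^ (2 : ℝ) = a i ^ 2 / w i := fun i => by
    rw [Real.rpow_two, div_pow, Real.sq_sqrt (hw i).le]
  have hsq_b : ∀ i, (b i * √(w i)) ^ (2 : ℝ) = b i ^ 2 * w i := fun i => by
    rw [Real.rpow_two, mul_pow, Real.sq_sqrt (hw i).le]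
  have hab : ∀ i, a i / √(w i) * (b i * √(w i)) = a i * b i := fun i => by
    have := Real.sqrt_pos.2 (hw i)
    field_simp
  have holder := Real.summable_and_inner_le_Lp_mul_Lq_tsum_of_nonneg Real.HolderConjugate.two_two
    (f := fun i => a i / √(w i)) (g := fun i => b i * √(w i))
    (fun i => div_nonneg (ha i) (Real.sqrt_nonneg _))
    (fun i => mul_nonneg (hb i) (Real.sqrt_nonneg _))
    (by simpa only [hsq_a] using hA) (by simpa only [hsq_b] using hB)
  simpa only [hsq_a, hsq_b, hab, ← Real.sqrt_eq_rpow] using holder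

theorem hasSum_zetaR {s : ℝ} (hs : 1 < s) :
    HasSum (fun n : ℕ => 1 / ((n : ℝ) + 1) ^ s) (zetaR s) := by
  refine (((Real.summable_one_div_nat_add_rpow 1 s).2 hs).congr fun n => ?_).hasSum
  rw [abs_of_pos (by positivity)]

theorem zetaR_nonneg (s : ℝ) : 0 ≤ zetaR s :=
  tsum_nonneg fun n => by positivity

theorem korWeightSq_pos {d : ℕ} (α : ℝ) (h : Fin d → ℤ) : 0 < korWeightSq α h :=
  prod_pos fun _ _ => lt_max_of_lt_right one_pos

theorem normSq_nonneg {d : ℕ} (h : Fin d → ℤ) : 0 ≤ normSq h :=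
  sum_nonneg fun _ _ => sq_nonneg _

theorem sq_normSq_le {d : ℕ} (h : Fin d → ℤ) : normSq h ^ 2 ≤ d * ∑ j, (h j : ℝ) ^ 4 := by
  have := sq_sum_le_card_mul_sum_sq (s := univ) (f := fun j => (h j : ℝ) ^ 2)
  simpa [normSq, ← pow_mul] using this

/-- Dominates both `m⁴ / r_α(m)²` and `1 / r_α(m)²`, so that `∏ₖ korobovRatio α (h k)` bounds
`h_j⁴ / r_α(h)²` for every `j`. -/
def korobovRatio (α : ℝ) (m : ℤ) : ℝ :=
  max ((m : ℝ) ^ 4) 1 / max (|(m : ℝ)| ^ (2 * α)) 1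

theorem korobovRatio_nonneg (α : ℝ) (m : ℤ) : 0 ≤ korobovRatio α m :=
  div_nonneg (zero_le_one.trans (le_max_right _ _)) (zero_le_one.trans (le_max_right _ _))

theorem korobovRatio_zero (α : ℝ) : korobovRatio α 0 = 1 := by
  simp [korobovRatio, Real.zero_rpow_le_one]

theorem korobovRatio_of_one_le_abs {α : ℝ} (hα : 0 ≤ α) {m : ℤ} (hm : 1 ≤ |(m : ℝ)|) :
    korobovRatio α m = 1 / |(m : ℝ)| ^ (2 * α - 4) := by
  have hpos : 0 < |(m : ℝ)| := one_pos.trans_le hm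
  have hnum : max ((m : ℝ) ^ 4) 1 = |(m : ℝ)| ^ (4 : ℝ) := by
    rw [Real.rpow_ofNat, ← Even.pow_abs (by decide), max_eq_left (one_le_pow₀ hm)]
  have hden : max (|(m : ℝ)| ^ (2 * α)) 1 = |(m : ℝ)| ^ (2 * α) :=
    max_eq_left (Real.one_le_rpow hm (by positivity))
  rw [korobovRatio, hnum, hden, Real.rpow_sub hpos, one_div_div]

theorem korobovRatio_of_abs_eq {α : ℝ} (hα : 0 ≤ α) {m : ℤ} {n : ℕ} (hm : |(m : ℝ)| = n + 1) :
    korobovRatio α m = 1 / ((n : ℝ) + 1) ^ (2 * α - 4) := by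
  rw [korobovRatio_of_one_le_abs hα (by rw [hm]; simp), hm]

theorem hasSum_korobovRatio {α : ℝ} (hα : 5 / 2 < α) :
    HasSum (korobovRatio α) (1 + 2 * zetaR (2 * α - 4)) := by
  have hζ := hasSum_zetaR (s := 2 * α - 4) (by linarith)
  have hpos : HasSum (fun n : ℕ => korobovRatio α (n + 1)) (zetaR (2 * α - 4)) := by
    refine hζ.congr_fun fun n => korobovRatio_of_abs_eq (by linarith) ?_
    push_cast
    exact abs_of_pos (by positivity)
  have hneg : HasSum (fun n : ℕ => korobovRatio α (-(n + 1))) (zetaR (2 * α - 4)) := by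
    refine hζ.congr_fun fun n => korobovRatio_of_abs_eq (by linarith) ?_
    push_cast
    rw [abs_neg, abs_of_pos (by positivity)]
  convert hpos.of_add_one_of_neg_add_one hneg using 1
  rw [korobovRatio_zero]
  ring

theorem pow_four_div_korWeightSq_le {d : ℕ} (α : ℝ) (h : Fin d → ℤ) (j : Fin d) :
    (h j : ℝ) ^ 4 / korWeightSq α h ≤ ∏ k, korobovRatio α (h k) := by
  simp only [korobovRatio, korWeightSq, prod_div_distrib]
  exact div_le_div_of_nonneg_right (le_prod_max_one (mem_univ j) fun k => (h k : ℝ) ^ 4)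
    (korWeightSq_pos α h).le

theorem sq_normSq_div_korWeightSq_le {d : ℕ} (α : ℝ) (h : Fin d → ℤ) :
    normSq h ^ 2 / korWeightSq α h ≤ d ^ 2 * ∏ k, korobovRatio α (h k) :=
  calc normSq h ^ 2 / korWeightSq α h ≤ d * ∑ j, (h j : ℝ) ^ 4 / korWeightSq α h := by
        rw [← sum_div, ← mul_div_assoc]
        exact div_le_div_of_nonneg_right (sq_normSq_le h) (korWeightSq_pos α h).le
    _ ≤ d * ∑ _j : Fin d, ∏ k, korobovRatio α (h k) := by
        gcongr with j
        exact pow_four_div_korWeightSq_le α h j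
    _ = d ^ 2 * ∏ k, korobovRatio α (h k) := by
        rw [sum_const, card_univ, Fintype.card_fin, nsmul_eq_mul]
        ring

theorem summable_and_tsum_sq_normSq_div_korWeightSq_le {d : ℕ} {α : ℝ} (hα : 5 / 2 < α) :
    (Summable fun h : Fin d → ℤ => normSq h ^ 2 / korWeightSq α h) ∧
      ∑' h : Fin d → ℤ, normSq h ^ 2 / korWeightSq α h ≤
        d ^ 2 * (1 + 2 * zetaR (2 * α - 4)) ^ d := by
  have hprod : HasSum (fun h : Fin d → ℤ => ∏ k, korobovRatio α (h k))
      ((1 + 2 * zetaR (2 * α - 4)) ^ d) := by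
    simpa using hasSum_fin_pi_prod_of_nonneg (fun _ => korobovRatio_nonneg α)
      (fun _ : Fin d => hasSum_korobovRatio hα)
  have hbound := hprod.summable.mul_left ((d : ℝ) ^ 2)
  have hle := sq_normSq_div_korWeightSq_le (d := d) α
  have hsummable : Summable fun h : Fin d → ℤ => normSq h ^ 2 / korWeightSq α h :=
    hbound.of_nonneg_of_le (fun h => div_nonneg (sq_nonneg _) (korWeightSq_pos α h).le) hle
  refine ⟨hsummable, ?_⟩
  calc ∑' h : Fin d → ℤ, normSq h ^ 2 / korWeightSq α h
      ≤ ∑' h : Fin d → ℤ, d ^ 2 * ∏ k, korobovRatio α (h k) := hsummable.tsum_le_tsum hle hbound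
    _ = d ^ 2 * (1 + 2 * zetaR (2 * α - 4)) ^ d := by rw [tsum_mul_left, hprod.tsum_eq]

theorem korobov_weighted_sum_sq_general
    (d : ℕ) (α : ℝ) (hα : 5 / 2 < α)
    (vhat : (Fin d → ℤ) → ℂ)
    (hsum : Summable fun h : Fin d → ℤ => ‖vhat h‖ ^ 2 * korWeightSq α h) :
    Summable (fun h : Fin d → ℤ => normSq h * ‖vhat h‖) ∧
    ∑' h : Fin d → ℤ, normSq h * ‖vhat h‖ ≤
      (d : ℝ) * (1 + 2 * zetaR (2 * α - 4)) ^ ((d : ℝ) / 2) *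
        Real.sqrt (∑' h : Fin d → ℤ, ‖vhat h‖ ^ 2 * korWeightSq α h) := by
  have hC : 0 ≤ 1 + 2 * zetaR (2 * α - 4) := by linarith [zetaR_nonneg (2 * α - 4)]
  obtain ⟨hA, hA_le⟩ := summable_and_tsum_sq_normSq_div_korWeightSq_le (d := d) hα
  obtain ⟨hsummable, hle⟩ := summable_mul_and_tsum_mul_le_sqrt_mul_sqrt_of_weight
    (b := fun h => ‖vhat h‖) normSq_nonneg (fun h => norm_nonneg _) (korWeightSq_pos α) hA hsum
  refine ⟨hsummable, hle.trans (mul_le_mul_of_nonneg_right ?_ (Real.sqrt_nonneg _))⟩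
  calc √(∑' h : Fin d → ℤ, normSq h ^ 2 / korWeightSq α h)
      ≤ √(d ^ 2 * (1 + 2 * zetaR (2 * α - 4)) ^ d) := Real.sqrt_le_sqrt hA_le
    _ = d * (1 + 2 * zetaR (2 * α - 4)) ^ ((d : ℝ) / 2) := by
        rw [Real.sqrt_mul (by positivity), Real.sqrt_sq (by positivity), Real.sqrt_eq_rpow,
          ← Real.rpow_natCast, ← Real.rpow_mul hC, mul_one_div]

/-- **Weighted summability of Korobov coefficients (first order).** For
`α > 5/2` and `‖v̂‖_α < ∞`,
`Σ_h ‖h‖₂² |v̂(h)| ≤ d (1 + 2ζ(2α−4))^{d/2} ‖v̂‖_α`; in particular the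
left-hand side is finite. -/
theorem korobov_weighted_sum_sq
    (d : ℕ) (hd : 1 ≤ d) (α : ℝ) (hα : 5 / 2 < α)
    (vhat : (Fin d → ℤ) → ℂ)
    (hsum : Summable fun h : Fin d → ℤ => ‖vhat h‖ ^ 2 * korWeightSq α h) :
    Summable (fun h : Fin d → ℤ => normSq h * ‖vhat h‖) ∧
    ∑' h : Fin d → ℤ, normSq h * ‖vhat h‖ ≤
      (d : ℝ) * (1 + 2 * zetaR (2 * α - 4)) ^ ((d : ℝ) / 2) *
        Real.sqrt (∑' h : Fin d → ℤ, ‖vhat h‖ ^ 2 * korWeightSq α h) :=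
  korobov_weighted_sum_sq_general d α hα vhat hsum
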